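/- Sakhnovich transfer-matrix inversion: let A, B be N×N matrices, S an invertible N×N matrix, Π₁ an N×n matrix and Π₂* an n×N matrix, satisfying the operator identity A S − S B = Π₁ Π₂*. Fix λ ∈ ℂ such that A − λI_N and B − λI_N are invertible. Then (I_n − Π₂* S⁻¹ (A − λI_N)⁻¹ Π₁) · (I_n + Π₂* (B − λI_N)⁻¹ S⁻¹ Π₁) = I_n. -/
import Mathlib


theorem sakhnovich_transfer_matrix_inverse {N n : ℕ}
    (A B S : Matrix (Fin N) (Fin N) ℂ)
    (hS : IsUnit S)
    (Pi1 : Matrix (Fin N) (Fin n) ℂ) (Pi2 : Matrix (Fin n) (Fin N) ℂ)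
    (hcol : A * S - S * B = Pi1 * Pi2)
    (lam : ℂ)
    (hA : IsUnit (A - lam • (1 : Matrix (Fin N) (Fin N) ℂ)))
    (hB : IsUnit (B - lam • (1 : Matrix (Fin N) (Fin N) ℂ))) :
    ((1 : Matrix (Fin n) (Fin n) ℂ) -
        Pi2 * S⁻¹ * (A - lam • (1 : Matrix (Fin N) (Fin N) ℂ))⁻¹ * Pi1) *
      ((1 : Matrix (Fin n) (Fin n) ℂ) +
        Pi2 * (B - lam • (1 : Matrix (Fin N) (Fin N) ℂ))⁻¹ * S⁻¹ * Pi1) = 1 := by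
  set A' := A - lam • (1 : Matrix (Fin N) (Fin N) ℂ) with hA'def
  set B' := B - lam • (1 : Matrix (Fin N) (Fin N) ℂ) with hB'def
  have hAd : IsUnit A'.det := (Matrix.isUnit_iff_isUnit_det _).mp hA
  have hBd : IsUnit B'.det := (Matrix.isUnit_iff_isUnit_det _).mp hB
  have hSd : IsUnit S.det := (Matrix.isUnit_iff_isUnit_det _).mp hS
  have hA1 : A'⁻¹ * A' = 1 := Matrix.nonsing_inv_mul _ hAd
  have hB2 : B' * B'⁻¹ = 1 := Matrix.mul_nonsing_inv _ hBd
  have hS1 : S⁻¹ * S = 1 := Matrix.nonsing_inv_mul _ hSd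
  have hS2 : S * S⁻¹ = 1 := Matrix.mul_nonsing_inv _ hSd
  have hcol' : Pi1 * Pi2 = A' * S - S * B' := by
    rw [← hcol, hA'def, hB'def]; noncomm_ring
  have key : A'⁻¹ * (Pi1 * Pi2) * B'⁻¹ = S * B'⁻¹ - A'⁻¹ * S := by
    rw [hcol', Matrix.mul_sub, Matrix.sub_mul, ← Matrix.mul_assoc, ← Matrix.mul_assoc,
      hA1, Matrix.one_mul, Matrix.mul_assoc (A'⁻¹ * S), hB2, Matrix.mul_one]
  have key2 : Pi2 * S⁻¹ * A'⁻¹ * Pi1 * (Pi2 * B'⁻¹ * S⁻¹ * Pi1)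
      = Pi2 * B'⁻¹ * S⁻¹ * Pi1 - Pi2 * S⁻¹ * A'⁻¹ * Pi1 := by
    have : Pi2 * S⁻¹ * A'⁻¹ * Pi1 * (Pi2 * B'⁻¹ * S⁻¹ * Pi1)
        = Pi2 * S⁻¹ * (A'⁻¹ * (Pi1 * Pi2) * B'⁻¹) * (S⁻¹ * Pi1) := by
      simp only [Matrix.mul_assoc]
    rw [this, key]
    rw [Matrix.mul_sub, Matrix.sub_mul]
    rw [show Pi2 * S⁻¹ * (S * B'⁻¹) = Pi2 * B'⁻¹ by
      rw [Matrix.mul_assoc, ← Matrix.mul_assoc S⁻¹, hS1, Matrix.one_mul]]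
    rw [show Pi2 * S⁻¹ * (A'⁻¹ * S) * (S⁻¹ * Pi1) = Pi2 * S⁻¹ * A'⁻¹ * Pi1 by
      simp only [Matrix.mul_assoc]
      rw [← Matrix.mul_assoc S, hS2, Matrix.one_mul]]
    simp only [Matrix.mul_assoc]
  rw [Matrix.sub_mul, Matrix.mul_add, Matrix.mul_add, Matrix.one_mul, Matrix.one_mul,
    Matrix.mul_one, key2]
  abel
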